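/- Let $H$ be a finite-dimensional complex inner product space, let $\Pi_{succ}, \Pi_C, \Pi_B, \Pi_A$ be orthogonal projections on $H$ with $\Pi_C + \Pi_B + \Pi_A = I$, suppose $\Pi_{succ}$ commutes with $\Pi_C$, and let $\phi \in H$ be a unit vector. Then $\|\Pi_{succ}\phi\|^2 \leq \|\Pi_C\phi\|^2 + 2\|\Pi_B\phi\|^2 + 2\|\Pi_{succ}\Pi_A\|^2$, where $\|\Pi_{succ}\Pi_A\|$ is the operator norm of the composition. -/
import Mathlib

open scoped InnerProductSpace

lemma proj_contr {H : Type*} [NormedAddCommGroup H] [InnerProductSpace ℂ H]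
    [FiniteDimensional ℂ H] (P : H →L[ℂ] H)
    (h1 : IsSelfAdjoint P) (h2 : P * P = P) (y : H) : ‖P y‖ ≤ ‖y‖ := by
  have hsym := h1.isSymmetric
  have hPP : P (P y) = P y := by
    conv_lhs => rw [← ContinuousLinearMap.mul_apply, h2]
  have key : (‖P y‖ : ℝ) ^ 2 = RCLike.re (⟪y, P y⟫_ℂ) := by
    have h : ⟪P y, P y⟫_ℂ = ⟪y, P y⟫_ℂ := by
      calc ⟪P y, P y⟫_ℂ = ⟪y, P (P y)⟫_ℂ := hsym y (P y)
      _ = ⟪y, P y⟫_ℂ := by rw [hPP]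
    rw [← h, inner_self_eq_norm_sq]
  have cs : RCLike.re (⟪y, P y⟫_ℂ) ≤ ‖y‖ * ‖P y‖ := by
    calc RCLike.re (⟪y, P y⟫_ℂ) ≤ ‖(⟪y, P y⟫_ℂ)‖ := RCLike.re_le_norm _
    _ ≤ ‖y‖ * ‖P y‖ := norm_inner_le_norm _ _
  nlinarith [norm_nonneg (P y), norm_nonneg y]

theorem stmt_6 {H : Type*} [NormedAddCommGroup H] [InnerProductSpace ℂ H]
    [FiniteDimensional ℂ H]
    (Ps PC PB PA : H →L[ℂ] H)
    (hPs1 : IsSelfAdjoint Ps) (hPs2 : Ps * Ps = Ps)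
    (hPC1 : IsSelfAdjoint PC) (hPC2 : PC * PC = PC)
    (hPB1 : IsSelfAdjoint PB) (hPB2 : PB * PB = PB)
    (hPA1 : IsSelfAdjoint PA) (hPA2 : PA * PA = PA)
    (hsum : PC + PB + PA = 1)
    (hcomm : Ps * PC = PC * Ps)
    (φ : H) (hφ : ‖φ‖ = 1) :
    ‖Ps φ‖ ^ 2 ≤ ‖PC φ‖ ^ 2 + 2 * ‖PB φ‖ ^ 2 + 2 * ‖Ps * PA‖ ^ 2 := by
  have hsymC := hPC1.isSymmetric
  set x := Ps φ with hx
  -- Pythagoras: ‖x‖² = ‖PC x‖² + ‖x - PC x‖²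
  have hCC : PC (PC x) = PC x := by
    conv_lhs => rw [← ContinuousLinearMap.mul_apply, hPC2]
  have horth : ⟪PC x, x - PC x⟫_ℂ = 0 := by
    calc ⟪PC x, x - PC x⟫_ℂ = ⟪x, PC (x - PC x)⟫_ℂ := hsymC x (x - PC x)
    _ = 0 := by rw [map_sub, hCC]; simp
  have hpyth : ‖x‖ ^ 2 = ‖PC x‖ ^ 2 + ‖x - PC x‖ ^ 2 := by
    have := norm_add_sq (𝕜 := ℂ) (PC x) (x - PC x)
    have hre : RCLike.re (⟪PC x, x - PC x⟫_ℂ) = 0 := by rw [horth]; simp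
    simp only [add_sub_cancel] at this
    rw [this, hre]; ring
  -- PC x = Ps (PC φ)
  have h1 : PC x = Ps (PC φ) := by
    have := congrFun (congrArg DFunLike.coe hcomm) φ
    simpa using this.symm
  have hb1 : ‖PC x‖ ≤ ‖PC φ‖ := by
    rw [h1]; exact proj_contr Ps hPs1 hPs2 _
  -- x - PC x = Ps (PB φ) + Ps (PA φ)
  have h2 : x - PC x = Ps (PB φ) + Ps (PA φ) := by
    have hsum' : PC φ + PB φ + PA φ = φ := by
      have := congrFun (congrArg DFunLike.coe hsum) φ
      simpa using this
    have hd : φ - PC φ = PB φ + PA φ := by nth_rewrite 1 [← hsum']; abel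
    rw [h1, hx, ← map_sub, hd, map_add]
  have hb2 : ‖Ps (PB φ)‖ ≤ ‖PB φ‖ := proj_contr Ps hPs1 hPs2 _
  have hb3 : ‖Ps (PA φ)‖ ≤ ‖Ps * PA‖ := by
    calc ‖Ps (PA φ)‖ = ‖(Ps * PA) φ‖ := rfl
    _ ≤ ‖Ps * PA‖ * ‖φ‖ := (Ps * PA).le_opNorm φ
    _ = ‖Ps * PA‖ := by rw [hφ, mul_one]
  have htri : ‖x - PC x‖ ≤ ‖Ps (PB φ)‖ + ‖Ps (PA φ)‖ := by
    rw [h2]; exact norm_add_le _ _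
  nlinarith [norm_nonneg (x - PC x), norm_nonneg (Ps (PB φ)), norm_nonneg (Ps (PA φ)),
    norm_nonneg (PC x), norm_nonneg (PC φ), norm_nonneg (PB φ), norm_nonneg (Ps * PA),
    sq_nonneg (‖Ps (PB φ)‖ - ‖Ps (PA φ)‖)]
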